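/- arXiv:1702.06443 — 11 statements merged into one kernel-verified Lean document; each statement's English description precedes it below -/
import Mathlib

section
/- If φ : ℝ^d → ℝ is continuous with compact support and has global linear independence, and f = Σ_{k∈ℤ^d} c(k) φ(·−k) ∈ V(φ) is nonseparable (i.e., f cannot be written as f = f₁ + f₂ with f₁, f₂ ∈ V(φ), f₁ ≠ 0, f₂ ≠ 0, and f₁·f₂ ≡ 0 on ℝ^d), then the graph 𝒢_f is connected. -/
/-- The signal `Σ_k c(k) φ(·−k)` in the shift-invariant space `V(φ)`. -/
noncomputable def sig (d : ℕ) (φ : (Fin d → ℝ) → ℝ) (c : (Fin d → ℤ) → ℝ) :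
    (Fin d → ℝ) → ℝ :=
  fun x => ∑' k : Fin d → ℤ, c k * φ (fun i => x i - k i)

/-- `f = Σ_k c(k) φ(·−k)` is nonseparable: it is not the sum of two nonzero signals of
`V(φ)` whose pointwise product vanishes identically. -/
def Nonseparable (d : ℕ) (φ : (Fin d → ℝ) → ℝ) (c : (Fin d → ℤ) → ℝ) : Prop :=
  ¬ ∃ c₁ c₂ : (Fin d → ℤ) → ℝ,
      sig d φ c₁ ≠ 0 ∧ sig d φ c₂ ≠ 0 ∧
      (∀ x, sig d φ c x = sig d φ c₁ x + sig d φ c₂ x) ∧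
      (∀ x, sig d φ c₁ x * sig d φ c₂ x = 0)

/-- The adjacency relation of the graph `𝒢_f` for `f = Σ_k c(k) φ(·−k)`:
vertices are the `k` with `c k ≠ 0`, and `k, k'` are adjacent when the supports of
`φ(·−k)` and `φ(·−k')` overlap. -/
def GraphAdj (d : ℕ) (φ : (Fin d → ℝ) → ℝ) (c : (Fin d → ℤ) → ℝ)
    (k k' : Fin d → ℤ) : Prop :=
  k ≠ k' ∧ c k ≠ 0 ∧ c k' ≠ 0 ∧
    ∃ x : Fin d → ℝ, φ (fun i => x i - k i) * φ (fun i => x i - k' i) ≠ 0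

/-!
If `𝒢_f` were disconnected, split the coefficients of `f` along a connected component `S`:
`f = f_S + f_{Sᶜ}`. No translate indexed by `S` overlaps one indexed by `Sᶜ`, so
`f_S · f_{Sᶜ} = 0`, and global linear independence makes both parts nonzero, contradicting
nonseparability.
-/

open Function Topology

section ShiftInvariant

variable {d : ℕ} {φ : (Fin d → ℝ) → ℝ}

lemma HasCompactSupport.finite_support_translates (hφ : HasCompactSupport φ) (x : Fin d → ℝ) :
    (support fun k : Fin d → ℤ => φ (fun i => x i - k i)).Finite := by
  have hemb : IsClosedEmbedding fun (k : Fin d → ℤ) (i : Fin d) => x i - k i :=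
    (Homeomorph.subLeft x).isClosedEmbedding.comp
      (IsClosedEmbedding.piMap fun _ => Int.isClosedEmbedding_coe_real)
  exact (hφ.comp_isClosedEmbedding hemb).isCompact.finite_of_discrete.subset (subset_tsupport _)

lemma HasCompactSupport.summable_sig (hφ : HasCompactSupport φ) (c : (Fin d → ℤ) → ℝ)
    (x : Fin d → ℝ) : Summable fun k : Fin d → ℤ => c k * φ (fun i => x i - k i) :=
  summable_of_hasFiniteSupport <|
    (hφ.finite_support_translates x).subset (support_mul_subset_right _ _)

lemma HasCompactSupport.sig_add (hφ : HasCompactSupport φ) (c₁ c₂ : (Fin d → ℤ) → ℝ)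
    (x : Fin d → ℝ) : sig d φ (c₁ + c₂) x = sig d φ c₁ x + sig d φ c₂ x := by
  simp only [sig, Pi.add_apply, add_mul]
  exact (hφ.summable_sig c₁ x).tsum_add (hφ.summable_sig c₂ x)

lemma exists_ne_zero_of_sig_ne_zero {c : (Fin d → ℤ) → ℝ} {x : Fin d → ℝ}
    (hx : sig d φ c x ≠ 0) : ∃ k, c k ≠ 0 ∧ φ (fun i => x i - k i) ≠ 0 := by
  contrapose! hx
  have hterm : ∀ k, c k * φ (fun i => x i - k i) = 0 := fun k => by
    by_cases hk : c k = 0 <;> simp [hk, hx]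
  simp [sig, hterm]

lemma sig_ne_zero_of_ne_zero
    (hGLI : ∀ c : (Fin d → ℤ) → ℝ, (∀ x, sig d φ c x = 0) → ∀ k, c k = 0)
    {c : (Fin d → ℤ) → ℝ} {k : Fin d → ℤ} (hk : c k ≠ 0) : sig d φ c ≠ 0 :=
  fun h => hk (hGLI c (congrFun h) k)

def IsGraphAdjClosed (d : ℕ) (φ : (Fin d → ℝ) → ℝ) (c : (Fin d → ℤ) → ℝ)
    (S : Set (Fin d → ℤ)) : Prop :=
  ∀ j j', j ∈ S → GraphAdj d φ c j j' → j' ∈ S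

lemma IsGraphAdjClosed.sig_indicator_mul_sig_indicator_compl {c : (Fin d → ℤ) → ℝ}
    {S : Set (Fin d → ℤ)} (hS : IsGraphAdjClosed d φ c S) (x : Fin d → ℝ) :
    sig d φ (S.indicator c) x * sig d φ (Sᶜ.indicator c) x = 0 := by
  by_contra hx
  obtain ⟨hin, hout⟩ := mul_ne_zero_iff.1 hx
  obtain ⟨j, hcj, hφj⟩ := exists_ne_zero_of_sig_ne_zero hin
  obtain ⟨j', hcj', hφj'⟩ := exists_ne_zero_of_sig_ne_zero hout
  have hj : j ∈ S := Set.mem_of_indicator_ne_zero hcj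
  have hj' : j' ∉ S := Set.mem_of_indicator_ne_zero hcj'
  refine hj' (hS j j' hj ⟨?_, fun h => hcj (by simp [h]), fun h => hcj' (by simp [h]),
    x, mul_ne_zero hφj hφj'⟩)
  rintro rfl
  exact hj' hj

theorem Nonseparable.mem_of_isGraphAdjClosed (hφ : HasCompactSupport φ)
    (hGLI : ∀ c : (Fin d → ℤ) → ℝ, (∀ x, sig d φ c x = 0) → ∀ k, c k = 0)
    {c : (Fin d → ℤ) → ℝ} (hns : Nonseparable d φ c) {S : Set (Fin d → ℤ)}
    (hS : IsGraphAdjClosed d φ c S) {k k' : Fin d → ℤ} (hkS : k ∈ S) (hk : c k ≠ 0)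
    (hk' : c k' ≠ 0) : k' ∈ S := by
  by_contra hk'S
  refine hns ⟨S.indicator c, Sᶜ.indicator c,
    sig_ne_zero_of_ne_zero hGLI (k := k) (by simpa [hkS]),
    sig_ne_zero_of_ne_zero hGLI (k := k') (by simpa [hk'S]),
    fun x => ?_, hS.sig_indicator_mul_sig_indicator_compl⟩
  rw [← hφ.sig_add, Set.indicator_self_add_compl]

end ShiftInvariant

theorem stmt1_general (d : ℕ) (φ : (Fin d → ℝ) → ℝ)
    (hsupp : HasCompactSupport φ)
    (hGLI : ∀ c : (Fin d → ℤ) → ℝ, (∀ x, sig d φ c x = 0) → ∀ k, c k = 0)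
    (c : (Fin d → ℤ) → ℝ) (hns : Nonseparable d φ c) :
    ∀ k k' : Fin d → ℤ, c k ≠ 0 → c k' ≠ 0 →
      Relation.ReflTransGen (GraphAdj d φ c) k k' := by
  intro k k' hk hk'
  have hcomponent : IsGraphAdjClosed d φ c {j | Relation.ReflTransGen (GraphAdj d φ c) k j} :=
    fun _ _ hj hadj => hj.tail hadj
  exact hns.mem_of_isGraphAdjClosed hsupp hGLI hcomponent .refl hk hk'

/-- if `φ` is continuous with compact support and globally linearly
independent, and `f = Σ_k c(k) φ(·−k)` is nonseparable, then the graph `𝒢_f` is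
connected. -/
theorem stmt1 (d : ℕ) (φ : (Fin d → ℝ) → ℝ)
    (hcont : Continuous φ) (hsupp : HasCompactSupport φ)
    (hGLI : ∀ c : (Fin d → ℤ) → ℝ, (∀ x, sig d φ c x = 0) → ∀ k, c k = 0)
    (c : (Fin d → ℤ) → ℝ) (hns : Nonseparable d φ c) :
    ∀ k k' : Fin d → ℤ, c k ≠ 0 → c k' ≠ 0 →
      Relation.ReflTransGen (GraphAdj d φ c) k k' :=
  stmt1_general d φ hsupp hGLI c hns
end

section
/- Let h(t) = max(1−|t|, 0) and φ₀(t) = h(4t−1) + h(4t−3) + h(4t−5) − h(4t−7). Define f₁(t) = Σ_{k∈ℤ} φ₀(t−k) and f₂(t) = Σ_{k∈ℤ} (−1)^k φ₀(t−k). Then f₁ and f₂ are nonzero, f₁ is supported in [0, 1/2] + ℤ, f₂ is supported in [1/2, 1] + ℤ, and f₁(t)·f₂(t) = 0 for all t ∈ ℝ. -/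
/-- The hat function `h(t) = max(1 − |t|, 0)`, supported on `[−1, 1]`. -/
noncomputable def hatFn (t : ℝ) : ℝ := max (1 - |t|) 0

/-- `φ₀(t) = h(4t−1) + h(4t−3) + h(4t−5) − h(4t−7)`. -/
noncomputable def φ₀ (t : ℝ) : ℝ :=
  hatFn (4 * t - 1) + hatFn (4 * t - 3) + hatFn (4 * t - 5) - hatFn (4 * t - 7)

/-- `f₁(t) = Σ_{k∈ℤ} φ₀(t − k)`. -/
noncomputable def f₁ (t : ℝ) : ℝ := ∑' k : ℤ, φ₀ (t - (k : ℝ))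

/-- `f₂(t) = Σ_{k∈ℤ} (−1)^k φ₀(t − k)`. -/
noncomputable def f₂ (t : ℝ) : ℝ := ∑' k : ℤ, (-1 : ℝ) ^ k * φ₀ (t - (k : ℝ))

/-!
On `[k, k + 1)` only the translates `φ₀(· - k + 1)` and `φ₀(· - k)` survive in the periodizations,
and writing `s = t - k` one has `φ₀(s) = h(4s−1) + h(4s−3)`, `φ₀(s + 1) = h(4s−1) − h(4s−3)`.
Hence `f₁(t) = 2 h(4s−1)` while `f₂(t) = ±2 h(4s−3)`: the sign alternation cancels the bump
`h(4s−1)` in `f₂` and the bump `h(4s−3)` in `f₁`. These two bumps live on `(0, 1/2)` and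
`(1/2, 1)`.
-/

lemma hatFn_zero : hatFn 0 = 1 := by simp [hatFn]

lemma hatFn_eq_zero_iff {x : ℝ} : hatFn x = 0 ↔ 1 ≤ |x| := by
  rw [hatFn, max_eq_right_iff, sub_nonpos]

lemma hatFn_ne_zero_iff {x : ℝ} : hatFn x ≠ 0 ↔ |x| < 1 := by
  rw [Ne, hatFn_eq_zero_iff, not_le]

lemma hatFn_eq_zero_of_le_neg_one {x : ℝ} (hx : x ≤ -1) : hatFn x = 0 :=
  hatFn_eq_zero_iff.2 (le_abs.2 (Or.inr (by linarith)))

lemma hatFn_eq_zero_of_one_le {x : ℝ} (hx : 1 ≤ x) : hatFn x = 0 :=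
  hatFn_eq_zero_iff.2 (le_abs.2 (Or.inl hx))

lemma hatFn_mul_hatFn_eq_zero {x y : ℝ} (h : 2 ≤ |x - y|) : hatFn x * hatFn y = 0 := by
  by_contra hxy
  obtain ⟨hx, hy⟩ := mul_ne_zero_iff.1 hxy
  have := abs_sub x y
  linarith [hatFn_ne_zero_iff.1 hx, hatFn_ne_zero_iff.1 hy, abs_neg y]

lemma φ₀_eq_zero_of_le_zero_or_two_le {t : ℝ} (ht : t ≤ 0 ∨ 2 ≤ t) : φ₀ t = 0 := by
  rcases ht with ht | ht
  · rw [φ₀, hatFn_eq_zero_of_le_neg_one (x := 4 * t - 1) (by linarith),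
      hatFn_eq_zero_of_le_neg_one (x := 4 * t - 3) (by linarith),
      hatFn_eq_zero_of_le_neg_one (x := 4 * t - 5) (by linarith),
      hatFn_eq_zero_of_le_neg_one (x := 4 * t - 7) (by linarith)]
    ring
  · rw [φ₀, hatFn_eq_zero_of_one_le (x := 4 * t - 1) (by linarith),
      hatFn_eq_zero_of_one_le (x := 4 * t - 3) (by linarith),
      hatFn_eq_zero_of_one_le (x := 4 * t - 5) (by linarith),
      hatFn_eq_zero_of_one_le (x := 4 * t - 7) (by linarith)]
    ring

lemma φ₀_of_mem_Ico {s : ℝ} (hs : s ∈ Set.Ico 0 1) :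
    φ₀ s = hatFn (4 * s - 1) + hatFn (4 * s - 3) := by
  rw [φ₀, hatFn_eq_zero_of_le_neg_one (x := 4 * s - 5) (by linarith [hs.2]),
    hatFn_eq_zero_of_le_neg_one (x := 4 * s - 7) (by linarith [hs.2])]
  ring

lemma φ₀_add_one_of_mem_Ico {s : ℝ} (hs : s ∈ Set.Ico 0 1) :
    φ₀ (s + 1) = hatFn (4 * s - 1) - hatFn (4 * s - 3) := by
  rw [φ₀, hatFn_eq_zero_of_one_le (x := 4 * (s + 1) - 1) (by linarith [hs.1]),
    hatFn_eq_zero_of_one_le (x := 4 * (s + 1) - 3) (by linarith [hs.1])]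
  ring_nf

lemma tsum_mul_φ₀_sub_intCast (c : ℤ → ℝ) (t : ℝ) :
    ∑' k : ℤ, c k * φ₀ (t - k) =
      c (⌊t⌋ - 1) * φ₀ (Int.fract t + 1) + c ⌊t⌋ * φ₀ (Int.fract t) := by
  have hvanish : ∀ k ∉ ({⌊t⌋ - 1, ⌊t⌋} : Finset ℤ), c k * φ₀ (t - k) = 0 := by
    intro k hk
    simp only [Finset.mem_insert, Finset.mem_singleton, not_or] at hk
    rcases (by omega : k ≤ ⌊t⌋ - 2 ∨ ⌊t⌋ + 1 ≤ k) with hk | hk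
    · have : (k : ℝ) ≤ ⌊t⌋ - 2 := by exact_mod_cast hk
      rw [φ₀_eq_zero_of_le_zero_or_two_le (Or.inr (by linarith [Int.floor_le t])),
        mul_zero]
    · have : (⌊t⌋ : ℝ) + 1 ≤ k := by exact_mod_cast hk
      rw [φ₀_eq_zero_of_le_zero_or_two_le (Or.inl (by linarith [Int.lt_floor_add_one t])),
        mul_zero]
  rw [tsum_eq_sum hvanish, Finset.sum_pair (by omega), Int.fract]
  push_cast
  ring_nf

lemma f₁_eq (t : ℝ) : f₁ t = 2 * hatFn (4 * Int.fract t - 1) := by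
  have hs : Int.fract t ∈ Set.Ico 0 1 := ⟨Int.fract_nonneg t, Int.fract_lt_one t⟩
  simpa [f₁, φ₀_of_mem_Ico hs, φ₀_add_one_of_mem_Ico hs, two_mul, add_add_add_comm]
    using tsum_mul_φ₀_sub_intCast (fun _ ↦ 1) t

lemma f₂_eq (t : ℝ) : f₂ t = (-1) ^ ⌊t⌋ * (2 * hatFn (4 * Int.fract t - 3)) := by
  have hs : Int.fract t ∈ Set.Ico 0 1 := ⟨Int.fract_nonneg t, Int.fract_lt_one t⟩
  rw [f₂, tsum_mul_φ₀_sub_intCast, φ₀_of_mem_Ico hs, φ₀_add_one_of_mem_Ico hs,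
    zpow_sub_one₀ (by norm_num)]
  ring

/-- `f₁` and `f₂` are nonzero, `f₁` is supported in `[0, 1/2] + ℤ`,
`f₂` is supported in `[1/2, 1] + ℤ`, and `f₁ · f₂ ≡ 0` on `ℝ`. -/
theorem stmt6 :
    f₁ ≠ 0 ∧ f₂ ≠ 0 ∧
    (∀ t : ℝ, f₁ t ≠ 0 → ∃ k : ℤ, t - (k : ℝ) ∈ Set.Icc (0 : ℝ) (1 / 2)) ∧
    (∀ t : ℝ, f₂ t ≠ 0 → ∃ k : ℤ, t - (k : ℝ) ∈ Set.Icc (1 / 2 : ℝ) 1) ∧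
    (∀ t : ℝ, f₁ t * f₂ t = 0) := by
  refine ⟨fun h ↦ ?_, fun h ↦ ?_, fun t ht ↦ ⟨⌊t⌋, ?_⟩, fun t ht ↦ ⟨⌊t⌋, ?_⟩, fun t ↦ ?_⟩
  · have := congrFun h (1 / 4)
    rw [f₁_eq, Int.fract_eq_self.2 (by norm_num)] at this
    norm_num [hatFn_zero] at this
  · have := congrFun h (3 / 4)
    rw [f₂_eq, Int.fract_eq_self.2 (by norm_num)] at this
    norm_num [hatFn_zero] at this
  · have h := abs_lt.1 (hatFn_ne_zero_iff.1 (right_ne_zero_of_mul (f₁_eq t ▸ ht)))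
    rw [← Int.fract]
    constructor <;> linarith
  · have h := abs_lt.1 (hatFn_ne_zero_iff.1
      (right_ne_zero_of_mul (right_ne_zero_of_mul (f₂_eq t ▸ ht))))
    rw [← Int.fract]
    constructor <;> linarith
  · have hdisj := hatFn_mul_hatFn_eq_zero (x := 4 * Int.fract t - 1) (y := 4 * Int.fract t - 3)
      (by norm_num)
    rw [f₁_eq, f₂_eq]
    linear_combination (4 * (-1) ^ ⌊t⌋ : ℝ) * hdisj
end

section
/- Let V be a finite-dimensional real vector space of continuous functions on a set A, with basis g₁, …, g_N. Then there exists a finite set Γ ⊂ A with #Γ ≤ N(N+1)/2 and functions d_γ : A → ℝ (γ ∈ Γ) such that for every f ∈ V and every x ∈ A, |f(x)|² = Σ_{γ∈Γ} d_γ(x) |f(γ)|². -/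
/-!
Let `Φ(x)` be the symmetric matrix `(g_i(x) g_j(x))_{i,j}`, viewed as a vector indexed by
unordered pairs `{i, j}`, a space of dimension `N(N+1)/2`. For `f = ∑ c_i g_i` one has
`f(x)² = ∑_{i,j} c_i c_j Φ(x)_{ij}`, a linear functional of `Φ(x)`. Choosing `Γ ⊆ A` so that
`Φ(Γ)` is a basis of the span of `Φ(A)` and writing `Φ(x) = ∑_γ d_γ(x) Φ(γ)`, this functional
gives `f(x)² = ∑_γ d_γ(x) f(γ)²`.
-/

open Submodule Set

section Reconstruction

variable {K α : Type*} [Field K]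

theorem exists_finset_card_le_finrank_forall_eq_sum_smul {M : Type*} [AddCommGroup M]
    [Module K M] [FiniteDimensional K M] (Φ : α → M) (A : Set α) :
    ∃ Γ : Finset α, ↑Γ ⊆ A ∧ Γ.card ≤ Module.finrank K M ∧
      ∃ d : α → α → K, ∀ x ∈ A, Φ x = ∑ γ ∈ Γ, d x γ • Φ γ := by
  obtain ⟨B, hBA, -, hspan, hind⟩ :=
    exists_linearIndepOn_extension (linearIndepOn_empty K Φ) (empty_subset A)
  have : Finite B := hind.finite
  lift B to Finset α using B.toFinite
  refine ⟨B, hBA, by simpa using hind.fintype_card_le_finrank, ?_⟩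
  have hmem (x : α) (hx : x ∈ A) : ∃ c : α → K, ∑ γ ∈ B, c γ • Φ γ = Φ x :=
    (mem_span_image_finset_iff_exists_fun' K).1 (hspan (mem_image_of_mem Φ hx))
  choose! d hd using hmem
  exact ⟨d, fun x hx => (hd x hx).symm⟩

end Reconstruction

section Sym2Products

variable {R α ι : Type*} [CommSemiring R]

def sym2Products (g : ι → α → R) (x : α) : Sym2 ι → R :=
  Sym2.lift ⟨fun i j => g i x * g j x, fun _ _ => mul_comm _ _⟩

variable [Fintype ι]

def sym2QuadForm (c : ι → R) : (Sym2 ι → R) →ₗ[R] R :=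
  ∑ p : ι × ι, (c p.1 * c p.2) • LinearMap.proj s(p.1, p.2)

theorem sym2QuadForm_sym2Products (c : ι → R) (g : ι → α → R) (x : α) :
    sym2QuadForm c (sym2Products g x) = (∑ i, c i * g i x) ^ 2 := by
  simp only [sym2QuadForm, sym2Products, LinearMap.sum_apply, LinearMap.smul_apply,
    LinearMap.proj_apply, Sym2.lift_mk, smul_eq_mul, sq, Finset.sum_mul_sum,
    ← Finset.univ_product_univ, Finset.sum_product]
  exact Finset.sum_congr rfl fun i _ => Finset.sum_congr rfl fun j _ => by ring

end Sym2Products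

theorem exists_finset_sq_eq_sum_mul_sq {K α ι : Type*} [Field K] [Fintype ι]
    (g : ι → α → K) (A : Set α) :
    ∃ Γ : Finset α, ↑Γ ⊆ A ∧ Γ.card ≤ Fintype.card (Sym2 ι) ∧
      ∃ d : α → α → K, ∀ f ∈ span K (range g), ∀ x ∈ A, f x ^ 2 = ∑ γ ∈ Γ, d x γ * f γ ^ 2 := by
  obtain ⟨Γ, hΓA, hcard, d, hd⟩ :=
    exists_finset_card_le_finrank_forall_eq_sum_smul (K := K) (sym2Products g) A
  refine ⟨Γ, hΓA, by simpa using hcard, d, fun f hf x hx => ?_⟩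
  obtain ⟨c, rfl⟩ := (mem_span_range_iff_exists_fun K).1 hf
  have hsq (y : α) : (∑ i, c i • g i) y ^ 2 = sym2QuadForm c (sym2Products g y) := by
    simp [sym2QuadForm_sym2Products]
  simp only [hsq, hd x hx, map_sum, map_smul, smul_eq_mul]

theorem stmt8_general (d N : ℕ) (A : Set (Fin d → ℝ))
    (V : Submodule ℝ ((Fin d → ℝ) → ℝ))
    (g : Module.Basis (Fin N) ℝ V) :
    ∃ Γ : Finset (Fin d → ℝ), ↑Γ ⊆ A ∧ Γ.card ≤ N * (N + 1) / 2 ∧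
      ∃ dco : (Fin d → ℝ) → (Fin d → ℝ) → ℝ,
        ∀ f ∈ V, ∀ x ∈ A, |f x| ^ 2 = ∑ γ ∈ Γ, dco x γ * |f γ| ^ 2 := by
  obtain ⟨Γ, hΓA, hcard, dco, hdco⟩ :=
    exists_finset_sq_eq_sum_mul_sq (fun i => (g i : (Fin d → ℝ) → ℝ)) A
  refine ⟨Γ, hΓA, ?_, dco, fun f hf x hx => ?_⟩
  · rwa [Sym2.card, Fintype.card_fin, Nat.choose_two_right, Nat.add_sub_cancel,
      Nat.mul_comm] at hcard
  · have hspan : f ∈ span ℝ (range fun i => (g i : (Fin d → ℝ) → ℝ)) := by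
      have := mem_map_of_mem (f := V.subtype) (g.mem_span ⟨f, hf⟩)
      rwa [map_span, ← range_comp] at this
    simpa only [sq_abs] using hdco f hspan x hx

/-- if `V` is an `N`-dimensional real vector space of continuous
functions on a set `A ⊆ ℝ^d`, with basis `g₁, …, g_N`, then there is a finite set
`Γ ⊆ A` with `#Γ ≤ N(N+1)/2` and functions `d_γ : A → ℝ` such that
`|f(x)|² = Σ_{γ∈Γ} d_γ(x) |f(γ)|²` for every `f ∈ V` and every `x ∈ A`. -/
theorem stmt8 (d N : ℕ) (A : Set (Fin d → ℝ))
    (V : Submodule ℝ ((Fin d → ℝ) → ℝ))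
    (hcont : ∀ f ∈ V, ContinuousOn f A)
    (g : Module.Basis (Fin N) ℝ V) :
    ∃ Γ : Finset (Fin d → ℝ), ↑Γ ⊆ A ∧ Γ.card ≤ N * (N + 1) / 2 ∧
      ∃ dco : (Fin d → ℝ) → (Fin d → ℝ) → ℝ,
        ∀ f ∈ V, ∀ x ∈ A, |f x| ^ 2 = ∑ γ ∈ Γ, dco x γ * |f γ| ^ 2 :=
  stmt8_general d N A V g
end

section
/- Let V be a locally finite-dimensional shift-invariant space of real-valued functions on ℝ^d (i.e., V is invariant under integer shifts and its restriction to any bounded open set is finite-dimensional). Then there exists a finite set Γ ⊂ (0,1)^d such that every nonseparable signal f ∈ V is determined, up to a sign, by its samples |f(y)|, y ∈ Γ + ℤ^d: if f, g ∈ V are nonseparable and |g(y)| = |f(y)| for all y ∈ Γ + ℤ^d, and if nonseparable signals are determined up to sign by magnitudes on all of ℝ^d, then g = f or g = −f. -/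
/-! Restricted to the open unit cube, the members of `V` lie in a finite-dimensional space `P`,
so their squares lie in the finite-dimensional space `P * P`. Any finite-dimensional space of
functions has a finite set `Γ` in the cube such that vanishing on `Γ` forces vanishing on the
whole cube. Applied to `g ^ 2 - f ^ 2` for all integer translates of `f` and `g`, this gives
`|g| = |f|` on every open cube `(0,1)^d + k`, hence on `ℝ^d` by continuity, and the phase
retrieval hypothesis on `ℝ^d` concludes. -/

/-- `f` is a nonseparable signal of the space `V`: `f ∈ V` and `f` is not the sum of
two nonzero members of `V` whose pointwise product vanishes identically. -/
def NonsepV (d : ℕ) (V : Submodule ℝ ((Fin d → ℝ) → ℝ)) (f : (Fin d → ℝ) → ℝ) : Prop :=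
  f ∈ V ∧ ¬ ∃ f₁ ∈ V, ∃ f₂ ∈ V,
    f₁ ≠ 0 ∧ f₂ ≠ 0 ∧ f = f₁ + f₂ ∧ ∀ x, f₁ x * f₂ x = 0

theorem exists_finset_eqOn_zero {K X : Type*} [Field K] (W : Submodule K (X → K))
    [FiniteDimensional K W] (S : Set X) :
    ∃ T : Finset X, ↑T ⊆ S ∧ ∀ h ∈ W, (∀ x ∈ T, h x = 0) → ∀ x ∈ S, h x = 0 := by
  classical
  let Z : Finset X → Submodule K (X → K) := fun T =>
    W ⊓ ⨅ x ∈ T, LinearMap.ker (LinearMap.proj x)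
  have mem_Z {h T} : h ∈ Z T ↔ h ∈ W ∧ ∀ x ∈ T, h x = 0 := by
    simp [Z, Submodule.mem_iInf]
  -- For `T` minimising `dim Z T`, adding a point of `S` to `T` cannot shrink `Z T`.
  obtain ⟨T, hTS, hmin⟩ := (measure fun T => Module.finrank K (Z T)).wf.has_min {T | ↑T ⊆ S}
    ⟨∅, by simp⟩
  refine ⟨T, hTS, fun h hW hT x hx => ?_⟩
  have hle : Z (insert x T) ≤ Z T := fun h' h'Z => by
    rw [mem_Z] at h'Z ⊢
    exact ⟨h'Z.1, fun y hy => h'Z.2 y (Finset.mem_insert_of_mem hy)⟩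
  have : FiniteDimensional K (Z T) := Submodule.finiteDimensional_of_le inf_le_left
  have heq : Z (insert x T) = Z T := Submodule.eq_of_le_of_finrank_le hle
    (not_lt.mp (hmin _ (by simpa [Set.insert_subset_iff] using ⟨hx, hTS⟩)))
  have : h ∈ Z (insert x T) := heq ▸ mem_Z.mpr ⟨hW, hT⟩
  exact (mem_Z.mp this).2 x (Finset.mem_insert_self x T)

theorem exists_finset_abs_eqOn {K X : Type*} [Field K] [LinearOrder K] [IsStrictOrderedRing K]
    (P : Submodule K (X → K)) [FiniteDimensional K P] (S : Set X) :
    ∃ T : Finset X, ↑T ⊆ S ∧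
      ∀ p ∈ P, ∀ q ∈ P, (∀ x ∈ T, |p x| = |q x|) → ∀ x ∈ S, |p x| = |q x| := by
  have hP : P.FG := Module.Finite.iff_fg.mp ‹_›
  have : FiniteDimensional K ↥(P * P) := Module.Finite.iff_fg.mpr (hP.mul hP)
  obtain ⟨T, hTS, hT⟩ := exists_finset_eqOn_zero (P * P) S
  refine ⟨T, hTS, fun p hp q hq hpq x hx => ?_⟩
  have hsq := hT (p * p - q * q)
    (sub_mem (Submodule.mul_mem_mul hp hp) (Submodule.mul_mem_mul hq hq)) (fun y hy => by
      rw [Pi.sub_apply, sub_eq_zero, Pi.mul_apply, Pi.mul_apply, ← sq, ← sq]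
      exact (sq_eq_sq_iff_abs_eq_abs _ _).mpr (hpq y hy)) x hx
  rw [Pi.sub_apply, sub_eq_zero, Pi.mul_apply, Pi.mul_apply, ← sq, ← sq] at hsq
  exact (sq_eq_sq_iff_abs_eq_abs _ _).mp hsq

theorem eq_of_eqOn_unitCube_add_int {d : ℕ} {φ ψ : (Fin d → ℝ) → ℝ}
    (hφ : Continuous φ) (hψ : Continuous ψ)
    (h : ∀ k : Fin d → ℤ, ∀ y ∈ Set.univ.pi fun _ => Set.Ioo (0 : ℝ) 1,
      φ (fun i => y i + k i) = ψ (fun i => y i + k i)) : φ = ψ := by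
  funext x
  let shift : (Fin d → ℝ) → (Fin d → ℝ) := fun y i => y i + ⌊x i⌋
  have hshift : Continuous shift := by fun_prop
  have hclosure : Set.EqOn (φ ∘ shift) (ψ ∘ shift)
      (closure (Set.univ.pi fun _ => Set.Ioo (0 : ℝ) 1)) :=
    Set.EqOn.closure (h _) (hφ.comp hshift) (hψ.comp hshift)
  rw [closure_pi_set, closure_Ioo zero_ne_one] at hclosure
  have hfract : (fun i => Int.fract (x i)) ∈ Set.univ.pi fun _ => Set.Icc (0 : ℝ) 1 :=
    fun i _ => ⟨Int.fract_nonneg _, (Int.fract_lt_one _).le⟩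
  simpa [shift, Int.fract_add_floor] using hclosure hfract

/-- a locally finite-dimensional shift-invariant space `V` of continuous
signals on `ℝ^d` admits a finite set `Γ ⊆ (0,1)^d` such that any nonseparable signal
is determined, up to a sign, from its phaseless samples on `Γ + ℤ^d`, assuming
nonseparable signals are determined up to a sign by their magnitudes on all of `ℝ^d`. -/
theorem stmt9 (d : ℕ) (V : Submodule ℝ ((Fin d → ℝ) → ℝ))
    (hcont : ∀ f ∈ V, Continuous f)
    (hshift : ∀ f ∈ V, ∀ k : Fin d → ℤ, (fun x => f (fun i => x i - (k i : ℝ))) ∈ V)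
    (hlocfd : ∀ A : Set (Fin d → ℝ), IsOpen A → Bornology.IsBounded A →
      ∃ (n : ℕ) (g : Fin n → ((Fin d → ℝ) → ℝ)),
        ∀ f ∈ V, ∃ a : Fin n → ℝ, ∀ x ∈ A, f x = ∑ i, a i * g i x)
    (hdet : ∀ f ∈ V, ∀ g ∈ V, NonsepV d V f →
      (∀ x, |g x| = |f x|) → g = f ∨ g = -f) :
    ∃ Γ : Finset (Fin d → ℝ), (∀ γ ∈ Γ, ∀ i, γ i ∈ Set.Ioo (0 : ℝ) 1) ∧
      ∀ f ∈ V, ∀ g ∈ V, NonsepV d V f → NonsepV d V g →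
        (∀ γ ∈ Γ, ∀ k : Fin d → ℤ,
          |g (fun i => γ i + (k i : ℝ))| = |f (fun i => γ i + (k i : ℝ))|) →
        g = f ∨ g = -f := by
  set S := Set.univ.pi fun _ : Fin d => Set.Ioo (0 : ℝ) 1
  obtain ⟨n, b, hb⟩ := hlocfd S (isOpen_set_pi Set.finite_univ fun _ _ => isOpen_Ioo)
    (.pi fun _ => Metric.isBounded_Ioo 0 1)
  let P := Submodule.span ℝ (Set.range b)
  have : FiniteDimensional ℝ P := FiniteDimensional.span_of_finite ℝ (Set.finite_range b)
  have hrestrict : ∀ f ∈ V, ∃ p ∈ P, Set.EqOn f p S := fun f hf => by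
    obtain ⟨a, ha⟩ := hb f hf
    refine ⟨∑ i, a i • b i, Submodule.sum_mem _ fun i _ =>
      Submodule.smul_mem _ _ (Submodule.subset_span ⟨i, rfl⟩), fun x hx => ?_⟩
    simp [ha x hx, Finset.sum_apply]
  have hshift_add : ∀ f ∈ V, ∀ k : Fin d → ℤ, (fun x => f (fun i => x i + (k i : ℝ))) ∈ V :=
    fun f hf k => by simpa using hshift f hf (-k)
  obtain ⟨T, hTS, hT⟩ := exists_finset_abs_eqOn P S
  refine ⟨T, fun γ hγ i => hTS hγ i (Set.mem_univ i), fun f hf g hg hfns _ hsamp => ?_⟩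
  refine hdet f hf g hg hfns (congrFun (eq_of_eqOn_unitCube_add_int (hcont g hg).abs
    (hcont f hf).abs fun k y hy => ?_))
  obtain ⟨p, hpP, hfp⟩ := hrestrict _ (hshift_add f hf k)
  obtain ⟨q, hqP, hgq⟩ := hrestrict _ (hshift_add g hg k)
  have := hT q hqP p hpP (fun γ hγ => by
    rw [← hgq (hTS hγ), ← hfp (hTS hγ)]; exact hsamp γ hγ k) y hy
  rwa [← hgq hy, ← hfp hy] at this
end

section
/- Let A be a bounded open set and V a locally finite-dimensional space of real-valued continuous signals on ℝ^d. Then there exists a finite set Γ ⊂ A and functions d_γ : A → ℝ such that |f(x)|² = Σ_{γ∈Γ} d_γ(x)|f(γ)|² holds for all f ∈ V and all x ∈ A. -/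
/-!
The matrices `G x = g(x) g(x)ᵀ` live in a finite-dimensional space, so finitely many of them,
`G γ` for `γ ∈ Γ`, span all of them: `G x = ∑ γ, d_γ(x) G γ`. Writing `f = ∑ aᵢ gᵢ` on `A`,
the value `f(x)² = aᵀ G(x) a` is linear in `G x`, so the same coefficients `d_γ(x)` express
`f(x)²` through the samples `f(γ)²`.
-/

open Matrix

theorem Submodule.exists_finset_subset_image_subset_span (R : Type*) {X M : Type*} [Semiring R]
    [AddCommMonoid M] [Module R M] [IsNoetherian R M] (Φ : X → M) (A : Set X) :
    ∃ Γ : Finset X, ↑Γ ⊆ A ∧ Φ '' A ⊆ span R (Φ '' Γ) := by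
  classical
  obtain ⟨s, hsA, hspan⟩ :=
    (fg_span_iff_fg_span_finset_subset (Φ '' A)).1 (IsNoetherian.noetherian (span R (Φ '' A)))
  obtain ⟨Γ, hΓA, rfl⟩ := Finset.subset_set_image_iff.1 hsA
  refine ⟨Γ, hΓA, ?_⟩
  rw [← Finset.coe_image, ← hspan]
  exact subset_span

theorem Matrix.toLinearMap₂'_vecMulVec_self {R n : Type*} [CommSemiring R] [Fintype n]
    [DecidableEq n] (u a : n → R) :
    toLinearMap₂' R (vecMulVec u u) a a = (a ⬝ᵥ u) ^ 2 := by
  rw [toLinearMap₂'_apply', vecMulVec_mulVec, op_smul_eq_smul, dotProduct_smul, smul_eq_mul,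
    dotProduct_comm u a, sq]

theorem stmt10_general (d : ℕ) (A : Set (Fin d → ℝ))
    (hA : IsOpen A) (hAb : Bornology.IsBounded A)
    (V : Submodule ℝ ((Fin d → ℝ) → ℝ))
    (hlocfd : ∀ B : Set (Fin d → ℝ), IsOpen B → Bornology.IsBounded B →
      ∃ (n : ℕ) (g : Fin n → ((Fin d → ℝ) → ℝ)),
        ∀ f ∈ V, ∃ a : Fin n → ℝ, ∀ x ∈ B, f x = ∑ i, a i * g i x) :
    ∃ Γ : Finset (Fin d → ℝ), ↑Γ ⊆ A ∧
      ∃ dco : (Fin d → ℝ) → (Fin d → ℝ) → ℝ,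
        ∀ f ∈ V, ∀ x ∈ A, |f x| ^ 2 = ∑ γ ∈ Γ, dco x γ * |f γ| ^ 2 := by
  obtain ⟨n, g, hg⟩ := hlocfd A hA hAb
  set G : (Fin d → ℝ) → Matrix (Fin n) (Fin n) ℝ := fun x ↦ vecMulVec (g · x) (g · x)
  obtain ⟨Γ, hΓA, hspan⟩ := Submodule.exists_finset_subset_image_subset_span ℝ G A
  choose! dco hdco using fun x (hx : x ∈ A) ↦
    (Submodule.mem_span_image_finset_iff_exists_fun' ℝ).1 (hspan ⟨x, hx, rfl⟩)
  refine ⟨Γ, hΓA, dco, fun f hf x hx ↦ ?_⟩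
  obtain ⟨a, ha⟩ := hg f hf
  have hsq : ∀ y ∈ A, |f y| ^ 2 = toLinearMap₂' ℝ (G y) a a := fun y hy ↦ by
    rw [sq_abs, ha y hy, toLinearMap₂'_vecMulVec_self]
    rfl
  calc |f x| ^ 2 = toLinearMap₂' ℝ (∑ γ ∈ Γ, dco x γ • G γ) a a := by rw [hdco x hx, hsq x hx]
    _ = ∑ γ ∈ Γ, dco x γ * toLinearMap₂' ℝ (G γ) a a := by
      simp only [map_sum, map_smul, LinearMap.sum_apply, LinearMap.smul_apply, smul_eq_mul]
    _ = ∑ γ ∈ Γ, dco x γ * |f γ| ^ 2 :=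
      Finset.sum_congr rfl fun γ hγ ↦ by rw [hsq γ (hΓA hγ)]

/-- if `A ⊆ ℝ^d` is a bounded open set and `V` is a locally
finite-dimensional space of real-valued continuous signals on `ℝ^d`, then there is a
finite set `Γ ⊆ A` and functions `d_γ : A → ℝ` with
`|f(x)|² = Σ_{γ∈Γ} d_γ(x)|f(γ)|²` for all `f ∈ V` and all `x ∈ A`. -/
theorem stmt10 (d : ℕ) (A : Set (Fin d → ℝ))
    (hA : IsOpen A) (hAb : Bornology.IsBounded A)
    (V : Submodule ℝ ((Fin d → ℝ) → ℝ))
    (hcont : ∀ f ∈ V, Continuous f)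
    (hlocfd : ∀ B : Set (Fin d → ℝ), IsOpen B → Bornology.IsBounded B →
      ∃ (n : ℕ) (g : Fin n → ((Fin d → ℝ) → ℝ)),
        ∀ f ∈ V, ∃ a : Fin n → ℝ, ∀ x ∈ B, f x = ∑ i, a i * g i x) :
    ∃ Γ : Finset (Fin d → ℝ), ↑Γ ⊆ A ∧
      ∃ dco : (Fin d → ℝ) → (Fin d → ℝ) → ℝ,
        ∀ f ∈ V, ∀ x ∈ A, |f x| ^ 2 = ∑ γ ∈ Γ, dco x γ * |f γ| ^ 2 :=
  stmt10_general d A hA hAb V hlocfd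
end

section
/- Let A be a bounded open set, V a locally finite-dimensional space of continuous signals on ℝ^d, g₁,…,g_N a basis of V|_A, and Γ ⊂ A a finite set such that {G(γ) = (g_n(γ)g_{n'}(γ))_{n,n'} : γ ∈ Γ} spans the linear span of {G(x) : x ∈ A}. Then V has the local complement property on A if and only if for every subset Γ' ⊂ Γ, either the vectors (g_n(γ'))_{1≤n≤N}, γ' ∈ Γ', span ℝ^N or the vectors (g_n(γ))_{1≤n≤N}, γ ∈ Γ∖Γ', span ℝ^N. -/
/-!
Write `ev x = (g_n(x))_n`, so that every `f ∈ V` is `x ↦ a ⬝ᵥ ev x` on `A` for a unique `a`.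
The evaluation vectors of `S ⊆ A` fail to span `ℝ^N` exactly when some nonzero `f ∈ V`
vanishes on `S`. If both `Γ'` and `Γ ∖ Γ'` fail, the product `f q = a ⬝ᵥ G(·) *ᵥ b` of the two
witnesses is a linear function of `G(x) = ev x ev xᵀ` vanishing on `Γ`, hence on all of `A`;
splitting `A` along the zero set of `f` violates the complement property. Conversely, given
`f, q` violating it, split `Γ` along the zero set of `f`: on one side `f` vanishes, on the
other `q` does, so one of them vanishes on a spanning set of evaluation points.
-/

def LocalComplementProperty (d : ℕ) (V : Submodule ℝ ((Fin d → ℝ) → ℝ))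
    (A : Set (Fin d → ℝ)) : Prop :=
  ∀ A' ⊆ A, ¬ ∃ f ∈ V, ∃ g ∈ V,
    (¬ ∀ x ∈ A, f x = 0) ∧ (¬ ∀ x ∈ A, g x = 0) ∧
    (∀ x ∈ A', f x = 0) ∧ (∀ x ∈ A \ A', g x = 0)

open Matrix

theorem Matrix.span_eq_top_iff_forall_dotProduct_eq_zero {ι K : Type*} [Fintype ι] [Field K]
    (S : Set (ι → K)) :
    Submodule.span K S = ⊤ ↔ ∀ a : ι → K, (∀ v ∈ S, a ⬝ᵥ v = 0) → a = 0 := by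
  classical
  rw [← Submodule.dualAnnihilator_eq_bot_iff, Submodule.eq_bot_iff,
    ← (dotProductEquiv K ι).toEquiv.forall_congr_right]
  refine forall_congr' fun a => ?_
  rw [LinearEquiv.coe_toEquiv, Submodule.mem_dualAnnihilator, LinearEquiv.map_eq_zero_iff]
  exact imp_congr_left ⟨fun h v hv => h v (Submodule.subset_span hv),
    fun h w hw => Submodule.span_le (p := LinearMap.ker (dotProductEquiv K ι a)).2 h hw⟩

theorem Matrix.exists_ne_zero_forall_dotProduct_eq_zero {ι K : Type*} [Fintype ι] [Field K]
    {S : Set (ι → K)} (hS : Submodule.span K S ≠ ⊤) :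
    ∃ a : ι → K, a ≠ 0 ∧ ∀ v ∈ S, a ⬝ᵥ v = 0 := by
  rw [Ne, span_eq_top_iff_forall_dotProduct_eq_zero] at hS
  push Not at hS
  obtain ⟨a, ha, ha0⟩ := hS
  exact ⟨a, ha0, ha⟩

theorem Matrix.dotProduct_mul_dotProduct_eq_dotProduct_vecMulVec_mulVec {ι R : Type*}
    [Fintype ι] [CommSemiring R] (a b u v : ι → R) :
    (a ⬝ᵥ u) * (v ⬝ᵥ b) = a ⬝ᵥ vecMulVec u v *ᵥ b := by
  rw [dotProduct_mulVec, vecMul_vecMulVec, smul_dotProduct, smul_eq_mul]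

theorem Matrix.dotProduct_mulVec_eq_zero_of_mem_span {ι R : Type*} [Fintype ι] [CommRing R]
    {a b : ι → R} {T : Set (Matrix ι ι R)} (hT : ∀ M ∈ T, a ⬝ᵥ M *ᵥ b = 0)
    {M : Matrix ι ι R} (hM : M ∈ Submodule.span R T) : a ⬝ᵥ M *ᵥ b = 0 := by
  induction hM using Submodule.span_induction with
  | mem M hM => exact hT M hM
  | zero => simp
  | add M M' _ _ h h' => simp [add_mulVec, dotProduct_add, h, h']
  | smul c M _ h => simp [smul_mulVec, h]

theorem Matrix.dotProduct_mul_dotProduct_eq_zero_of_vecMulVec_mem_span {X ι R : Type*}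
    [Fintype ι] [CommRing R] {u : X → ι → R} {Γ : Set X} {a b : ι → R}
    (hΓ : ∀ γ ∈ Γ, (a ⬝ᵥ u γ) * (b ⬝ᵥ u γ) = 0) {x : X}
    (hx : vecMulVec (u x) (u x) ∈
      Submodule.span R {M | ∃ γ ∈ Γ, M = vecMulVec (u γ) (u γ)}) :
    (a ⬝ᵥ u x) * (b ⬝ᵥ u x) = 0 := by
  rw [dotProduct_comm b, dotProduct_mul_dotProduct_eq_dotProduct_vecMulVec_mulVec]
  refine dotProduct_mulVec_eq_zero_of_mem_span ?_ hx
  rintro _ ⟨γ, hγ, rfl⟩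
  rw [← dotProduct_mul_dotProduct_eq_dotProduct_vecMulVec_mulVec, dotProduct_comm _ b]
  exact hΓ γ hγ

theorem sum_smul_apply_eq_dotProduct {X ι R : Type*} [Fintype ι] [Semiring R] (a : ι → R)
    (g : ι → X → R) (x : X) : (∑ n, a n • g n) x = a ⬝ᵥ fun n => g n x := by
  simp [Finset.sum_apply, dotProduct]

theorem eq_zero_on_of_span_eq_top {X ι K : Type*} [Fintype ι] [Field K] {g : ι → X → K}
    {A S : Set X} {f : X → K} {a : ι → K}
    (hf : ∀ x ∈ A, f x = a ⬝ᵥ fun n => g n x) (hSA : S ⊆ A)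
    (hS : Submodule.span K ((fun γ n => g n γ) '' S) = ⊤) (hfS : ∀ x ∈ S, f x = 0) :
    ∀ x ∈ A, f x = 0 := by
  have ha : a = 0 := by
    refine (span_eq_top_iff_forall_dotProduct_eq_zero _).1 hS a ?_
    rintro _ ⟨γ, hγ, rfl⟩
    rw [← hf γ (hSA hγ), hfS γ hγ]
  intro x hx
  rw [hf x hx, ha, zero_dotProduct]

section LocalComplementProperty

variable {d N : ℕ} {A : Set (Fin d → ℝ)} {V : Submodule ℝ ((Fin d → ℝ) → ℝ)}
  {g : Fin N → (Fin d → ℝ) → ℝ} {Γ : Finset (Fin d → ℝ)}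

theorem LocalComplementProperty.span_eq_top_or_span_sdiff_eq_top
    (hLCP : LocalComplementProperty d V A) (hgV : ∀ n, g n ∈ V)
    (hindep : ∀ a : Fin N → ℝ, (∀ x ∈ A, ∑ n, a n * g n x = 0) → a = 0)
    (hΓspan : ∀ x ∈ A,
      (Matrix.of fun n n' => g n x * g n' x) ∈
        Submodule.span ℝ {M : Matrix (Fin N) (Fin N) ℝ |
          ∃ γ ∈ Γ, M = Matrix.of fun n n' => g n γ * g n' γ})
    {Γ' : Finset (Fin d → ℝ)} :
    Submodule.span ℝ ((fun γ n => g n γ) '' ↑Γ') = ⊤ ∨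
      Submodule.span ℝ ((fun γ n => g n γ) '' ↑(Γ \ Γ')) = ⊤ := by
  by_contra! ⟨hΓ', hΓ''⟩
  obtain ⟨a, ha0, ha⟩ := exists_ne_zero_forall_dotProduct_eq_zero hΓ'
  obtain ⟨b, hb0, hb⟩ := exists_ne_zero_forall_dotProduct_eq_zero hΓ''
  set f := ∑ n, a n • g n
  set q := ∑ n, b n • g n
  have hfV : f ∈ V := V.sum_mem fun n _ => V.smul_mem _ (hgV n)
  have hqV : q ∈ V := V.sum_mem fun n _ => V.smul_mem _ (hgV n)
  have hf : ∀ x, f x = a ⬝ᵥ fun n => g n x := sum_smul_apply_eq_dotProduct a g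
  have hq : ∀ x, q x = b ⬝ᵥ fun n => g n x := sum_smul_apply_eq_dotProduct b g
  have hfq : ∀ x ∈ A, f x * q x = 0 := by
    intro x hx
    rw [hf, hq]
    refine dotProduct_mul_dotProduct_eq_zero_of_vecMulVec_mem_span (fun γ hγ => ?_) (hΓspan x hx)
    by_cases hγ' : γ ∈ Γ'
    · rw [ha _ ⟨γ, hγ', rfl⟩, zero_mul]
    · rw [hb _ ⟨γ, by simp [hγ, hγ'], rfl⟩, mul_zero]
  have hf_ne : ¬ ∀ x ∈ A, f x = 0 := fun h =>
    ha0 (hindep a fun x hx => (hf x).symm.trans (h x hx))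
  have hq_ne : ¬ ∀ x ∈ A, q x = 0 := fun h =>
    hb0 (hindep b fun x hx => (hq x).symm.trans (h x hx))
  refine hLCP {x ∈ A | f x = 0} (fun x hx => hx.1)
    ⟨f, hfV, q, hqV, hf_ne, hq_ne, fun x hx => hx.2, fun x ⟨hxA, hxf⟩ => ?_⟩
  exact (mul_eq_zero.1 (hfq x hxA)).resolve_left fun h => hxf ⟨hxA, h⟩

theorem localComplementProperty_of_span_eq_top_or_span_sdiff_eq_top
    (hspan : ∀ f ∈ V, ∃ a : Fin N → ℝ, ∀ x ∈ A, f x = ∑ n, a n * g n x) (hΓA : ↑Γ ⊆ A)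
    (h : ∀ Γ' ⊆ Γ,
      Submodule.span ℝ ((fun γ n => g n γ) '' ↑Γ') = ⊤ ∨
        Submodule.span ℝ ((fun γ n => g n γ) '' ↑(Γ \ Γ')) = ⊤) :
    LocalComplementProperty d V A := by
  rintro A' - ⟨f, hfV, q, hqV, hf0, hq0, hfA', hqA⟩
  obtain ⟨a, ha⟩ := hspan f hfV
  obtain ⟨b, hb⟩ := hspan q hqV
  rcases h (Γ.filter (f · = 0)) (Finset.filter_subset _ _) with hΓ' | hΓ''
  · refine hf0 (eq_zero_on_of_span_eq_top ha ?_ hΓ' fun x hx => ?_)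
    · exact fun x hx => hΓA (Finset.mem_filter.1 hx).1
    · exact (Finset.mem_filter.1 hx).2
  · refine hq0 (eq_zero_on_of_span_eq_top hb ?_ hΓ'' fun x hx => ?_)
    · exact fun x hx => hΓA (Finset.mem_sdiff.1 hx).1
    · obtain ⟨hxΓ, hxf⟩ := Finset.mem_sdiff.1 hx
      refine hqA x ⟨hΓA hxΓ, fun hxA' => hxf ?_⟩
      exact Finset.mem_filter.2 ⟨hxΓ, hfA' x hxA'⟩

end LocalComplementProperty

theorem stmt11_general (d N : ℕ) (A : Set (Fin d → ℝ))
    (V : Submodule ℝ ((Fin d → ℝ) → ℝ))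
    (g : Fin N → ((Fin d → ℝ) → ℝ)) (hgV : ∀ n, g n ∈ V)
    (hspan : ∀ f ∈ V, ∃ a : Fin N → ℝ, ∀ x ∈ A, f x = ∑ n, a n * g n x)
    (hindep : ∀ a : Fin N → ℝ, (∀ x ∈ A, ∑ n, a n * g n x = 0) → a = 0)
    (Γ : Finset (Fin d → ℝ)) (hΓA : ↑Γ ⊆ A)
    (hΓspan : ∀ x ∈ A,
      (Matrix.of fun n n' => g n x * g n' x) ∈
        Submodule.span ℝ {M : Matrix (Fin N) (Fin N) ℝ |
          ∃ γ ∈ Γ, M = Matrix.of fun n n' => g n γ * g n' γ}) :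
    LocalComplementProperty d V A ↔
      ∀ Γ' ⊆ Γ,
        Submodule.span ℝ ((fun γ => fun n => g n γ) '' ↑Γ') = (⊤ : Submodule ℝ (Fin N → ℝ)) ∨
        Submodule.span ℝ ((fun γ => fun n => g n γ) '' ↑(Γ \ Γ')) = (⊤ : Submodule ℝ (Fin N → ℝ)) :=
  ⟨fun hLCP _ _ => hLCP.span_eq_top_or_span_sdiff_eq_top hgV hindep hΓspan,
    localComplementProperty_of_span_eq_top_or_span_sdiff_eq_top hspan hΓA⟩

/-- with `g₁,…,g_N` a basis of `V|_A` and `Γ ⊆ A` a finite set whose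
outer products `G(γ)` span the space spanned by `{G(x) : x ∈ A}`, `V` has the local
complement property on `A` iff for every `Γ' ⊆ Γ`, the vectors `(g_n(γ'))_n, γ' ∈ Γ'`
span `ℝ^N` or the vectors `(g_n(γ))_n, γ ∈ Γ ∖ Γ'` span `ℝ^N`. -/
theorem stmt11 (d N : ℕ) (A : Set (Fin d → ℝ))
    (hA : IsOpen A) (hAb : Bornology.IsBounded A)
    (V : Submodule ℝ ((Fin d → ℝ) → ℝ)) (hcont : ∀ f ∈ V, Continuous f)
    (g : Fin N → ((Fin d → ℝ) → ℝ)) (hgV : ∀ n, g n ∈ V)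
    (hspan : ∀ f ∈ V, ∃ a : Fin N → ℝ, ∀ x ∈ A, f x = ∑ n, a n * g n x)
    (hindep : ∀ a : Fin N → ℝ, (∀ x ∈ A, ∑ n, a n * g n x = 0) → a = 0)
    (Γ : Finset (Fin d → ℝ)) (hΓA : ↑Γ ⊆ A)
    (hΓspan : ∀ x ∈ A,
      (Matrix.of fun n n' => g n x * g n' x) ∈
        Submodule.span ℝ {M : Matrix (Fin N) (Fin N) ℝ |
          ∃ γ ∈ Γ, M = Matrix.of fun n n' => g n γ * g n' γ}) :
    LocalComplementProperty d V A ↔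
      ∀ Γ' ⊆ Γ,
        Submodule.span ℝ ((fun γ => fun n => g n γ) '' ↑Γ') = (⊤ : Submodule ℝ (Fin N → ℝ)) ∨
        Submodule.span ℝ ((fun γ => fun n => g n γ) '' ↑(Γ \ Γ')) = (⊤ : Submodule ℝ (Fin N → ℝ)) :=
  stmt11_general d N A V g hgV hspan hindep Γ hΓA hΓspan
end

section
/- Let V be a real linear space of functions, A a set, and suppose V has the local complement property on A. Then for any f, g ∈ V with |g(x)| = |f(x)| for all x ∈ A, there exists δ ∈ {−1, 1} such that g(x) = δ f(x) for all x ∈ A. Conversely, if every pair f, g ∈ V with equal magnitudes on A agree up to a global sign on A, then V has the local complement property on A. -/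
/-! `|g| = |f|` on `A` says exactly that `(f + g) * (f - g)` vanishes on `A`, and the local
complement property says exactly that a product of two members of `V` can vanish on `A` only if
one factor does. Applied to `f + g` and `f - g`, this turns one property into the other. -/

section

variable {α : Type*}

def HasLocalComplementProperty {M₀ : Type*} [Zero M₀] (S : Set (α → M₀)) (A : Set α) : Prop :=
  ∀ A' ⊆ A, ¬ ∃ f ∈ S, ∃ g ∈ S,
    (¬ ∀ x ∈ A, f x = 0) ∧ (¬ ∀ x ∈ A, g x = 0) ∧
    (∀ x ∈ A', f x = 0) ∧ (∀ x ∈ A \ A', g x = 0)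

theorem hasLocalComplementProperty_iff_mul_eq_zero {M₀ : Type*} [MulZeroClass M₀]
    [NoZeroDivisors M₀] (S : Set (α → M₀)) (A : Set α) :
    HasLocalComplementProperty S A ↔
      ∀ f ∈ S, ∀ g ∈ S, (∀ x ∈ A, f x * g x = 0) → (∀ x ∈ A, f x = 0) ∨ ∀ x ∈ A, g x = 0 := by
  constructor
  · intro hS f hf g hg hfg
    by_contra! hne
    refine hS {x ∈ A | f x = 0} (Set.sep_subset _ _) ⟨f, hf, g, hg, ?_, ?_, fun x hx ↦ hx.2, ?_⟩
    · simpa using hne.1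
    · simpa using hne.2
    · intro x ⟨hxA, hx⟩
      exact (mul_eq_zero.mp (hfg x hxA)).resolve_left fun h ↦ hx ⟨hxA, h⟩
  · rintro hS A' hA' ⟨f, hf, g, hg, hf0, hg0, hfA', hgA⟩
    refine (hS f hf g hg fun x hx ↦ ?_).elim hf0 hg0
    by_cases hx' : x ∈ A'
    · simp [hfA' x hx']
    · simp [hgA x ⟨hx, hx'⟩]

variable {R : Type*} [CommRing R] [LinearOrder R] [IsStrictOrderedRing R]

theorem abs_eq_abs_iff_add_mul_sub_eq_zero (a b : R) : |b| = |a| ↔ (a + b) * (a - b) = 0 := by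
  rw [abs_eq_abs, mul_eq_zero, add_eq_zero_iff_eq_neg, sub_eq_zero]
  constructor <;> rintro (h | h) <;> simp [h]

theorem forall_eq_mul_sign_iff_forall_mul_eq_zero (G : AddSubgroup (α → R)) (A : Set α) :
    (∀ f ∈ G, ∀ g ∈ G, (∀ x ∈ A, |g x| = |f x|) →
      ∃ δ : R, (δ = 1 ∨ δ = -1) ∧ ∀ x ∈ A, g x = δ * f x) ↔
    ∀ f ∈ G, ∀ g ∈ G, (∀ x ∈ A, f x * g x = 0) → (∀ x ∈ A, f x = 0) ∨ ∀ x ∈ A, g x = 0 := by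
  constructor
  · intro hG f hf g hg hfg
    have habs : ∀ x ∈ A, |f x - g x| = |f x + g x| := fun x hx ↦ by
      rw [abs_eq_abs_iff_add_mul_sub_eq_zero]
      linear_combination 4 * hfg x hx
    obtain ⟨δ, rfl | rfl, hδ⟩ := hG _ (G.add_mem hf hg) _ (G.sub_mem hf hg) habs <;>
      simp only [Pi.add_apply, Pi.sub_apply] at hδ
    · refine .inr fun x hx ↦ ?_
      have : 2 * g x = 0 := by linear_combination -(hδ x hx)
      simpa using this
    · refine .inl fun x hx ↦ ?_
      have : 2 * f x = 0 := by linear_combination (hδ x hx)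
      simpa using this
  · intro hG f hf g hg habs
    have hprod : ∀ x ∈ A, (f x + g x) * (f x - g x) = 0 := fun x hx ↦
      (abs_eq_abs_iff_add_mul_sub_eq_zero _ _).mp (habs x hx)
    rcases hG _ (G.add_mem hf hg) _ (G.sub_mem hf hg) hprod with h | h <;>
      simp only [Pi.add_apply, Pi.sub_apply] at h
    · exact ⟨-1, .inr rfl, fun x hx ↦ by linear_combination (h x hx)⟩
    · exact ⟨1, .inl rfl, fun x hx ↦ by linear_combination -(h x hx)⟩

end

/-- a real linear space `V` of functions has the local complement
property on `A` if and only if any two members of `V` with equal magnitudes on `A`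
agree up to a global sign on `A`. -/
theorem stmt12 (α : Type*) (V : Submodule ℝ (α → ℝ)) (A : Set α) :
    (∀ A' ⊆ A, ¬ ∃ f ∈ V, ∃ g ∈ V,
      (¬ ∀ x ∈ A, f x = 0) ∧ (¬ ∀ x ∈ A, g x = 0) ∧
      (∀ x ∈ A', f x = 0) ∧ (∀ x ∈ A \ A', g x = 0)) ↔
    (∀ f ∈ V, ∀ g ∈ V, (∀ x ∈ A, |g x| = |f x|) →
      ∃ δ : ℝ, (δ = 1 ∨ δ = -1) ∧ ∀ x ∈ A, g x = δ * f x) :=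
  (hasLocalComplementProperty_iff_mul_eq_zero (V : Set (α → ℝ)) A).trans
    (forall_eq_mul_sign_iff_forall_mul_eq_zero V.toAddSubgroup A).symm
end

section
/- Let V be a real vector space of functions on A, and suppose there exists a finite Γ ⊂ A such that: for every Γ' ⊂ Γ, there is no f ∈ V with f ≢ 0 on A and f(γ') = 0 for all γ' ∈ Γ', or there is no g ∈ V with g ≢ 0 on A and g(γ) = 0 for all γ ∈ Γ∖Γ'; and additionally |f(x)|² is determined on A by the values |f(γ)|², γ ∈ Γ, via |f(x)|² = Σ_{γ∈Γ} d_γ(x)|f(γ)|² for fixed functions d_γ. Then V has the local complement property on A. Conversely, the local complement property on A implies the discrete complement property on such a Γ. -/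
/-- `V` has the local complement property on `A`. -/
def LCPa (α : Type*) (V : Submodule ℝ (α → ℝ)) (A : Set α) : Prop :=
  ∀ A' ⊆ A, ¬ ∃ f ∈ V, ∃ g ∈ V,
    (¬ ∀ x ∈ A, f x = 0) ∧ (¬ ∀ x ∈ A, g x = 0) ∧
    (∀ x ∈ A', f x = 0) ∧ (∀ x ∈ A \ A', g x = 0)

/-- The discrete complement property of `V` on the finite set `Γ` relative to `A`. -/
def DCP (α : Type*) [DecidableEq α] (V : Submodule ℝ (α → ℝ)) (A : Set α) (Γ : Finset α) : Prop :=
  ∀ Γ' ⊆ Γ,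
    (¬ ∃ f ∈ V, (¬ ∀ x ∈ A, f x = 0) ∧ ∀ γ ∈ Γ', f γ = 0) ∨
    (¬ ∃ g ∈ V, (¬ ∀ x ∈ A, g x = 0) ∧ ∀ γ ∈ Γ \ Γ', g γ = 0)

/-!
The discrete property implies the local one by restricting a splitting `A = A' ∪ (A \ A')` to
`Γ ⊆ A`. For the converse, polarizing the interpolation formula gives
`f x * g x = Σ_γ d_γ(x) f(γ) g(γ)`, so two functions vanishing on complementary parts of `Γ`
have pointwise product zero on `A`; the local property forbids this unless one of them
vanishes on `A` (split `A` along the zero set of `f`).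
-/

section

variable {α : Type*} {V : Submodule ℝ (α → ℝ)} {A : Set α}

theorem LCPa.of_DCP [DecidableEq α] {Γ : Finset α} (hΓA : ↑Γ ⊆ A) (h : DCP α V A Γ) :
    LCPa α V A := by
  classical
  rintro A' - ⟨f, hfV, g, hgV, hfA, hgA, hfA', hgA'⟩
  rcases h (Γ.filter (· ∈ A')) (Finset.filter_subset _ _) with hf | hg
  · exact hf ⟨f, hfV, hfA, fun γ hγ => hfA' γ (Finset.mem_filter.mp hγ).2⟩
  · refine hg ⟨g, hgV, hgA, fun γ hγ => hgA' γ ?_⟩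
    obtain ⟨hγΓ, hγA'⟩ := Finset.mem_sdiff.mp hγ
    exact ⟨hΓA hγΓ, fun h => hγA' (Finset.mem_filter.mpr ⟨hγΓ, h⟩)⟩

theorem LCPa.eq_zero_or_eq_zero_of_mul_eq_zero (h : LCPa α V A) {f g : α → ℝ}
    (hfV : f ∈ V) (hgV : g ∈ V) (hfg : ∀ x ∈ A, f x * g x = 0) :
    (∀ x ∈ A, f x = 0) ∨ (∀ x ∈ A, g x = 0) := by
  rw [or_iff_not_and_not]
  rintro ⟨hfA, hgA⟩
  refine h {x | x ∈ A ∧ f x = 0} (fun x hx => hx.1)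
    ⟨f, hfV, g, hgV, hfA, hgA, fun x hx => hx.2, fun x ⟨hxA, hx⟩ => ?_⟩
  exact (mul_eq_zero.mp (hfg x hxA)).resolve_left fun hfx => hx ⟨hxA, hfx⟩

theorem mul_eq_sum_of_sq_eq_sum (Γ : Finset α) (d : α → ℝ) {f g : α → ℝ} {x : α}
    (hf : f x ^ 2 = ∑ γ ∈ Γ, d γ * f γ ^ 2) (hg : g x ^ 2 = ∑ γ ∈ Γ, d γ * g γ ^ 2)
    (hfg : (f x + g x) ^ 2 = ∑ γ ∈ Γ, d γ * (f γ + g γ) ^ 2) :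
    f x * g x = ∑ γ ∈ Γ, d γ * (f γ * g γ) := by
  have hsum : ∑ γ ∈ Γ, d γ * (f γ + g γ) ^ 2 =
      ∑ γ ∈ Γ, d γ * f γ ^ 2 + 2 * ∑ γ ∈ Γ, d γ * (f γ * g γ) + ∑ γ ∈ Γ, d γ * g γ ^ 2 := by
    simp only [Finset.mul_sum, ← Finset.sum_add_distrib]
    exact Finset.sum_congr rfl fun _ _ => by ring
  linear_combination (hfg - hf - hg + hsum) / 2

theorem DCP.of_LCPa [DecidableEq α] {Γ : Finset α} (d : α → α → ℝ)
    (hd : ∀ f ∈ V, ∀ x ∈ A, |f x| ^ 2 = ∑ γ ∈ Γ, d x γ * |f γ| ^ 2) (h : LCPa α V A) :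
    DCP α V A Γ := by
  intro Γ' hΓ'
  rw [← not_and_or]
  rintro ⟨⟨f, hfV, hfA, hfΓ'⟩, ⟨g, hgV, hgA, hgΓ'⟩⟩
  have hsq : ∀ f ∈ V, ∀ x ∈ A, f x ^ 2 = ∑ γ ∈ Γ, d x γ * f γ ^ 2 := by
    simpa only [sq_abs] using hd
  have hfg_Γ : ∀ γ ∈ Γ, f γ * g γ = 0 := fun γ hγ => by
    by_cases hγ' : γ ∈ Γ'
    · rw [hfΓ' γ hγ', zero_mul]
    · rw [hgΓ' γ (Finset.mem_sdiff.mpr ⟨hγ, hγ'⟩), mul_zero]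
  have hfg : ∀ x ∈ A, f x * g x = 0 := fun x hx => by
    rw [mul_eq_sum_of_sq_eq_sum Γ (d x) (hsq f hfV x hx) (hsq g hgV x hx)
      (hsq (f + g) (V.add_mem hfV hgV) x hx)]
    exact Finset.sum_eq_zero fun γ hγ => by rw [hfg_Γ γ hγ, mul_zero]
  exact (h.eq_zero_or_eq_zero_of_mul_eq_zero hfV hgV hfg).elim hfA hgA

end

/-- given a finite set `Γ ⊆ A` with the interpolation property
`|f(x)|² = Σ_{γ∈Γ} d_γ(x)|f(γ)|²` on `A`, the discrete complement property on `Γ`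
implies the local complement property on `A`; and conversely the local complement
property on `A` implies the discrete complement property on such a `Γ`. -/
theorem stmt15 (α : Type*) [DecidableEq α] (V : Submodule ℝ (α → ℝ)) (A : Set α)
    (Γ : Finset α) (hΓA : ↑Γ ⊆ A) (dco : α → α → ℝ)
    (hinterp : ∀ f ∈ V, ∀ x ∈ A, |f x| ^ 2 = ∑ γ ∈ Γ, dco x γ * |f γ| ^ 2) :
    (DCP α V A Γ → LCPa α V A) ∧ (LCPa α V A → DCP α V A Γ) :=
  ⟨LCPa.of_DCP hΓA, DCP.of_LCPa dco hinterp⟩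
end

section
/- Let Φ : ℝ → ℝ³ be given by Φ(x) = (1/2)(0,1,1)ᵀ + (0,1,−1)ᵀ x + (1/2)(1,−2,1)ᵀ x³. Then every 3×3 submatrix of the 3×5 matrix (Φ(0), Φ(1/5), Φ(2/5), Φ(3/5), Φ(4/5)) = (1/250)·[[0,1,8,27,64],[125,173,209,221,197],[125,76,33,2,−11]] is nonsingular; consequently the five vectors Φ(m/5), 0 ≤ m ≤ 4, form a phase retrievable frame for ℝ³ (any x ∈ ℝ³ is determined up to sign from |⟨x, Φ(m/5)⟩|, 0 ≤ m ≤ 4). -/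
/-!
For `v ∈ ℝ³`, `⟨v, Φ(t)⟩ = a + b t + c t³` where `(a, b, c)` is an invertible linear image
of `v`. A polynomial without `t²` term vanishing at three distinct points `t₁, t₂, t₃` with
`t₁ + t₂ + t₃ ≠ 0` is zero, so no nonzero vector is orthogonal to three of the `Φ(m/5)`: any
three of them are linearly independent. Among five indices, a set or its complement contains
three of them, which gives the complement property and hence phase retrievability.
-/

/-- `Φ(x) = (1/2)(0,1,1)ᵀ + (0,1,−1)ᵀ x + (1/2)(1,−2,1)ᵀ x³`. -/
noncomputable def Φvec (x : ℝ) : Fin 3 → ℝ :=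
  ![x ^ 3 / 2, 1 / 2 + x - x ^ 3, 1 / 2 - x + x ^ 3 / 2]

open Matrix Function

section ComplementProperty

variable {K ι n : Type*} [Field K] [Fintype n]

theorem linearIndependent_of_forall_dotProduct_eq_zero [Fintype ι] [DecidableEq n]
    {v : ι → n → K} (hcard : Fintype.card ι = Fintype.card n)
    (h : ∀ z, (∀ i, v i ⬝ᵥ z = 0) → z = 0) : LinearIndependent K v := by
  let e := Fintype.equivOfCardEq hcard
  rw [← linearIndependent_equiv e.symm]
  refine (linearIndependent_rows_iff_isUnit (A := of (v ∘ e.symm))).mpr ?_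
  rw [← mulVec_injective_iff_isUnit, ← coe_mulVecLin, injective_iff_map_eq_zero]
  intro z hz
  refine h z fun i => ?_
  simpa [mulVec] using congrFun hz (e i)

/-- The complement property of Balan–Casazza–Edidin, with "the part spans" phrased as
"only `0` is orthogonal to the part". -/
def HasComplementProperty (a : ι → n → K) : Prop :=
  ∀ S : Set ι, (∀ z, (∀ i ∈ S, z ⬝ᵥ a i = 0) → z = 0) ∨ (∀ z, (∀ i ∉ S, z ⬝ᵥ a i = 0) → z = 0)

theorem HasComplementProperty.of_le_card [Fintype ι] {a : ι → n → K} (k : ℕ)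
    (hcard : 2 * k ≤ Fintype.card ι + 1)
    (h : ∀ s : Finset ι, k ≤ s.card → ∀ z, (∀ i ∈ s, z ⬝ᵥ a i = 0) → z = 0) :
    HasComplementProperty a := by
  classical
  intro S
  set s := Finset.univ.filter (· ∈ S)
  set t := Finset.univ.filter (· ∉ S)
  have hsplit : s.card + t.card = Fintype.card ι := Finset.card_filter_add_card_filter_not _
  by_cases hs : k ≤ s.card
  · exact .inl fun z hz => h s hs z fun i hi => hz i (Finset.mem_filter.mp hi).2
  · exact .inr fun z hz => h t (by omega) z fun i hi => hz i (Finset.mem_filter.mp hi).2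

theorem HasComplementProperty.eq_or_eq_neg [LinearOrder K] [IsStrictOrderedRing K]
    {a : ι → n → K} (ha : HasComplementProperty a) {x y : n → K}
    (h : ∀ i, |x ⬝ᵥ a i| = |y ⬝ᵥ a i|) : y = x ∨ y = -x := by
  rcases ha {i | x ⬝ᵥ a i = y ⬝ᵥ a i} with hS | hS
  · refine .inl (sub_eq_zero.mp (hS (y - x) fun i hi => ?_))
    rw [sub_dotProduct, hi.symm, sub_self]
  · refine .inr (eq_neg_of_add_eq_zero_left (hS (y + x) fun i hi => ?_))
    rw [add_dotProduct, (abs_eq_abs.mp (h i)).resolve_left hi, add_neg_cancel]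

end ComplementProperty

theorem depressed_cubic_coeffs_eq_zero {a b c x₁ x₂ x₃ : ℝ} (h₁₂ : x₁ ≠ x₂) (h₁₃ : x₁ ≠ x₃)
    (h₂₃ : x₂ ≠ x₃) (hsum : x₁ + x₂ + x₃ ≠ 0)
    (e₁ : a + b * x₁ + c * x₁ ^ 3 = 0) (e₂ : a + b * x₂ + c * x₂ ^ 3 = 0)
    (e₃ : a + b * x₃ + c * x₃ ^ 3 = 0) :
    a = 0 ∧ b = 0 ∧ c = 0 := by
  have d₁₂ : b + c * (x₁ ^ 2 + x₁ * x₂ + x₂ ^ 2) = 0 := by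
    refine (mul_eq_zero.mp ?_).resolve_left (sub_ne_zero.mpr h₁₂)
    linear_combination e₁ - e₂
  have d₁₃ : b + c * (x₁ ^ 2 + x₁ * x₃ + x₃ ^ 2) = 0 := by
    refine (mul_eq_zero.mp ?_).resolve_left (sub_ne_zero.mpr h₁₃)
    linear_combination e₁ - e₃
  have hc : c = 0 := by
    refine (mul_eq_zero.mp ?_).resolve_left (mul_ne_zero (sub_ne_zero.mpr h₂₃) hsum)
    linear_combination d₁₂ - d₁₃
  have hb : b = 0 := by linear_combination d₁₂ - (x₁ ^ 2 + x₁ * x₂ + x₂ ^ 2) * hc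
  exact ⟨by linear_combination e₁ - x₁ * hb - x₁ ^ 3 * hc, hb, hc⟩

theorem dotProduct_Φvec (v : Fin 3 → ℝ) (t : ℝ) :
    v ⬝ᵥ Φvec t = (v 1 + v 2) / 2 + (v 1 - v 2) * t + (v 0 / 2 - v 1 + v 2 / 2) * t ^ 3 := by
  simp only [dotProduct, Fin.sum_univ_three, Φvec, cons_val_zero, cons_val_one, cons_val_two,
    Nat.succ_eq_add_one, Nat.reduceAdd, tail_cons, head_cons]
  ring

theorem eq_zero_of_dotProduct_Φvec_eq_zero {ι : Type*} {p : ι → ℝ} (hp : Injective p)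
    (hp₀ : ∀ i, 0 ≤ p i) {s : Finset ι} (hs : 3 ≤ s.card) {v : Fin 3 → ℝ}
    (h : ∀ i ∈ s, v ⬝ᵥ Φvec (p i) = 0) : v = 0 := by
  classical
  obtain ⟨t, hts, ht⟩ := Finset.exists_subset_card_eq hs
  obtain ⟨i, j, k, hij, hik, hjk, rfl⟩ := Finset.card_eq_three.mp ht
  have hsum : p i + p j + p k ≠ 0 := fun h₀ => by
    have := hp₀ i; have := hp₀ j; have := hp₀ k
    exact hp.ne hij (by linarith)
  have vanishes (m) (hm : m ∈ ({i, j, k} : Finset ι)) := dotProduct_Φvec v (p m) ▸ h m (hts hm)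
  obtain ⟨ha, hb, hc⟩ := depressed_cubic_coeffs_eq_zero (hp.ne hij) (hp.ne hik) (hp.ne hjk) hsum
    (vanishes i (by simp)) (vanishes j (by simp)) (vanishes k (by simp))
  ext n
  fin_cases n <;>
    simp only [Fin.zero_eta, Fin.mk_one, Fin.reduceFinMk, Pi.zero_apply] <;> linarith

/-- the matrix `(Φ(0) Φ(1/5) Φ(2/5) Φ(3/5) Φ(4/5))` equals
`(1/250)·[[0,1,8,27,64],[125,173,209,221,197],[125,76,33,2,−11]]`, every `3×3`
submatrix of it is nonsingular (any three of the five columns are linearly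
independent), and consequently `Φ(m/5)`, `0 ≤ m ≤ 4`, is a phase retrievable frame
for `ℝ³`. -/
theorem stmt16 :
    (∀ (n : Fin 3) (m : Fin 5),
      Φvec ((m : ℕ) / 5 : ℝ) n =
        (!![0, 1, 8, 27, 64; 125, 173, 209, 221, 197; 125, 76, 33, 2, -11] :
          Matrix (Fin 3) (Fin 5) ℝ) n m / 250) ∧
    (∀ s : Finset (Fin 5), s.card = 3 →
      LinearIndependent ℝ (fun i : ↥s => Φvec (((i : Fin 5) : ℕ) / 5 : ℝ))) ∧
    (∀ x y : Fin 3 → ℝ,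
      (∀ m : Fin 5, |∑ n, x n * Φvec ((m : ℕ) / 5 : ℝ) n| =
        |∑ n, y n * Φvec ((m : ℕ) / 5 : ℝ) n|) → y = x ∨ y = -x) := by
  have hp : Injective fun m : Fin 5 => ((m : ℕ) / 5 : ℝ) := fun m m' h => by
    simpa [div_left_inj' (show (5 : ℝ) ≠ 0 by norm_num), Fin.val_inj] using h
  have spark (s : Finset (Fin 5)) (hs : 3 ≤ s.card) (v : Fin 3 → ℝ)
      (h : ∀ m ∈ s, v ⬝ᵥ Φvec ((m : ℕ) / 5 : ℝ) = 0) : v = 0 :=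
    eq_zero_of_dotProduct_Φvec_eq_zero hp (fun m => by positivity) hs h
  refine ⟨fun n m => ?_, fun s hs => ?_, fun x y h => ?_⟩
  · fin_cases n <;> fin_cases m <;> norm_num [Φvec]
  · refine linearIndependent_of_forall_dotProduct_eq_zero (by simp [hs]) fun z hz => ?_
    exact spark s hs.ge z fun m hm => dotProduct_comm z _ ▸ hz ⟨m, hm⟩
  · exact (HasComplementProperty.of_le_card 3 (by simp) spark).eq_or_eq_neg h
end

section
/- With Φ(x) = (1/2)(0,1,1)ᵀ + (0,1,−1)ᵀ x + (1/2)(1,−2,1)ᵀ x³ on (0,1): the span of {Φ(x) : x ∈ (0,1)} is all of ℝ³, and the span of the outer products {Φ(x)Φ(x)ᵀ : x ∈ (0,1)} is the full 6-dimensional space of 3×3 real symmetric matrices; however, the five outer products Φ(m/5)Φ(m/5)ᵀ, 0 ≤ m ≤ 4, do not span this 6-dimensional space (since 5 < 6). -/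
/-- The outer product `Φ(x)Φ(x)ᵀ`. -/
noncomputable def outerΦ (x : ℝ) : Matrix (Fin 3) (Fin 3) ℝ :=
  Matrix.of fun i j => Φvec x i * Φvec x j

/-- The submodule of symmetric `3×3` real matrices. -/
def SymmSub : Submodule ℝ (Matrix (Fin 3) (Fin 3) ℝ) where
  carrier := {M | M.transpose = M}
  add_mem' := by
    intro a b ha hb
    simp only [Set.mem_setOf_eq, Matrix.transpose_add] at *
    rw [ha, hb]
  zero_mem' := by simp
  smul_mem' := by
    intro r a ha
    simp only [Set.mem_setOf_eq, Matrix.transpose_smul] at *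
    rw [ha]

/-!
Write `Φ(x) = A u(x)` with `u(x) = (1, x, x³)` and `A` invertible, so that
`Φ(x)Φ(x)ᵀ = A u(x)u(x)ᵀ Aᵀ`, and congruence by `A` maps the symmetric matrices onto
themselves. The pairwise sums of the exponents `0, 1, 3` are distinct, so
`u(x)u(x)ᵀ = ∑ xᵏ Eₖ` over `k ∈ {0, 1, 2, 3, 4, 6}` with `Eₖ` the standard basis of the
symmetric matrices. At infinitely many points, the values of a polynomial with vector
coefficients span the same space as its coefficients: a functional vanishing on the values
yields a polynomial with infinitely many roots. Five matrices span at most five dimensions.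
-/
open Polynomial in
theorem Submodule.span_image_sum_pow_smul {K V ι : Type*} [Field K] [AddCommGroup V]
    [Module K V] [Fintype ι] {e : ι → ℕ} (he : Function.Injective e) (v : ι → V) {S : Set K}
    (hS : S.Infinite) :
    span K ((fun x => ∑ i, x ^ e i • v i) '' S) = span K (Set.range v) := by
  apply le_antisymm
  · rw [span_le]
    rintro _ ⟨x, -, rfl⟩
    exact sum_mem fun i _ => smul_mem _ _ (subset_span ⟨i, rfl⟩)
  · rw [span_le]
    rintro _ ⟨k, rfl⟩
    by_contra hk
    obtain ⟨f, hfk, hf⟩ := exists_dual_map_eq_bot_of_notMem hk inferInstance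
    let P : K[X] := ∑ i, C (f (v i)) * X ^ e i
    have hroots : S ⊆ {x | P.IsRoot x} := fun x hx => by
      have := LinearMap.le_ker_iff_map.mpr hf (subset_span ⟨x, hx, rfl⟩)
      simp only [LinearMap.mem_ker, map_sum, map_smul, smul_eq_mul] at this
      change (∑ i, C (f (v i)) * X ^ e i).eval x = 0
      simpa only [eval_finsetSum, eval_mul, eval_C, eval_pow, eval_X, mul_comm] using this
    have hcoeff : P.coeff (e k) = f (v k) := by
      simp only [P, finsetSum_coeff, coeff_C_mul_X_pow]
      rw [Finset.sum_eq_single k (fun i _ hik => if_neg (he.ne hik.symm)) (by simp), if_pos rfl]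
    exact hfk (by rw [← hcoeff, eq_zero_of_infinite_isRoot P (hS.mono hroots), coeff_zero])

open Submodule Matrix

def cubicMonomials (x : ℝ) : Fin 3 → ℝ := ![1, x, x ^ 3]

theorem span_image_cubicMonomials {S : Set ℝ} (hS : S.Infinite) :
    span ℝ (cubicMonomials '' S) = ⊤ := by
  have hsum :
      cubicMonomials = fun x => ∑ i, x ^ (![0, 1, 3] i) • Pi.basisFun ℝ (Fin 3) i := by
    ext x i
    fin_cases i <;> simp [cubicMonomials, Fin.sum_univ_three]
  rw [hsum, span_image_sum_pow_smul (by decide) _ hS, (Pi.basisFun ℝ (Fin 3)).span_eq]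

def symBasis : Fin 6 → Matrix (Fin 3) (Fin 3) ℝ :=
  ![!![1, 0, 0; 0, 0, 0; 0, 0, 0], !![0, 1, 0; 1, 0, 0; 0, 0, 0], !![0, 0, 0; 0, 1, 0; 0, 0, 0],
    !![0, 0, 1; 0, 0, 0; 1, 0, 0], !![0, 0, 0; 0, 0, 1; 0, 1, 0], !![0, 0, 0; 0, 0, 0; 0, 0, 1]]

theorem sum_smul_symBasis (g : Fin 6 → ℝ) :
    ∑ k, g k • symBasis k = !![g 0, g 1, g 3; g 1, g 2, g 4; g 3, g 4, g 5] := by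
  ext i j
  fin_cases i <;> fin_cases j <;> simp [symBasis, Fin.sum_univ_six]

theorem linearIndependent_symBasis : LinearIndependent ℝ symBasis := by
  rw [Fintype.linearIndependent_iff]
  intro g hg k
  rw [sum_smul_symBasis] at hg
  have := congr_fun₂ hg
  fin_cases k
  exacts [this 0 0, this 0 1, this 1 1, this 0 2, this 1 2, this 2 2]

theorem span_symBasis : span ℝ (Set.range symBasis) = SymmSub := by
  apply le_antisymm
  · rw [span_le]
    rintro _ ⟨k, rfl⟩
    change (symBasis k)ᵀ = symBasis k
    fin_cases k <;> (ext i j; fin_cases i <;> fin_cases j <;> rfl)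
  · intro M hM
    change Mᵀ = M at hM
    have hdecomp : M = ∑ k, ![M 0 0, M 0 1, M 1 1, M 0 2, M 1 2, M 2 2] k • symBasis k := by
      rw [sum_smul_symBasis]
      ext i j
      have h10 : M 1 0 = M 0 1 := congr_fun₂ hM 0 1
      have h20 : M 2 0 = M 0 2 := congr_fun₂ hM 0 2
      have h21 : M 2 1 = M 1 2 := congr_fun₂ hM 1 2
      fin_cases i <;> fin_cases j <;> simp [h10, h20, h21]
    rw [hdecomp]
    exact sum_mem fun k _ => smul_mem _ _ (subset_span ⟨k, rfl⟩)

theorem finrank_SymmSub : Module.finrank ℝ ↥SymmSub = 6 := by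
  rw [← span_symBasis, finrank_span_eq_card linearIndependent_symBasis, Fintype.card_fin]

theorem span_image_vecMulVec_cubicMonomials {S : Set ℝ} (hS : S.Infinite) :
    span ℝ ((fun x => vecMulVec (cubicMonomials x) (cubicMonomials x)) '' S) = SymmSub := by
  have hsum : (fun x => vecMulVec (cubicMonomials x) (cubicMonomials x)) =
      fun x => ∑ k, x ^ (![0, 1, 2, 3, 4, 6] k) • symBasis k := by
    ext x i j
    fin_cases i <;> fin_cases j <;>
      simp [cubicMonomials, symBasis, vecMulVec_apply, Fin.sum_univ_six] <;> ring
  rw [hsum, span_image_sum_pow_smul (by decide) _ hS, span_symBasis]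

theorem map_congruence_SymmSub {A : Matrix (Fin 3) (Fin 3) ℝ} (hA : IsUnit A) :
    SymmSub.map (LinearMap.mulLeft ℝ A ∘ₗ LinearMap.mulRight ℝ Aᵀ) = SymmSub := by
  apply le_antisymm
  · rintro _ ⟨M, hM : Mᵀ = M, rfl⟩
    change (A * (M * Aᵀ))ᵀ = A * (M * Aᵀ)
    rw [transpose_mul, transpose_mul, hM, transpose_transpose, Matrix.mul_assoc]
  · intro M (hM : Mᵀ = M)
    have hAB : A * A⁻¹ = 1 := mul_nonsing_inv A ((isUnit_iff_isUnit_det A).mp hA)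
    refine ⟨A⁻¹ * M * A⁻¹ᵀ, ?_, ?_⟩
    · change (A⁻¹ * M * A⁻¹ᵀ)ᵀ = A⁻¹ * M * A⁻¹ᵀ
      rw [transpose_mul, transpose_mul, hM, transpose_transpose, Matrix.mul_assoc]
    · change A * (A⁻¹ * M * A⁻¹ᵀ * Aᵀ) = M
      rw [Matrix.mul_assoc, Matrix.mul_assoc, ← transpose_mul, hAB, transpose_one,
        Matrix.mul_one, ← Matrix.mul_assoc, hAB, Matrix.one_mul]

/-- The columns are the coefficients of `1`, `x`, `x³` in `Φ(x)`. -/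
noncomputable def ΦcoeffMatrix : Matrix (Fin 3) (Fin 3) ℝ :=
  !![0, 0, 1 / 2; 1 / 2, 1, -1; 1 / 2, -1, 1 / 2]

theorem isUnit_ΦcoeffMatrix : IsUnit ΦcoeffMatrix := by
  rw [isUnit_iff_isUnit_det, isUnit_iff_ne_zero]
  simp [ΦcoeffMatrix, det_fin_three]
  norm_num

theorem Φvec_eq_mulVec (x : ℝ) : Φvec x = ΦcoeffMatrix *ᵥ cubicMonomials x := by
  ext i
  fin_cases i <;>
    simp [Φvec, ΦcoeffMatrix, cubicMonomials, mulVec, dotProduct, Fin.sum_univ_three] <;> ring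

theorem outerΦ_eq_mul_vecMulVec_mul (x : ℝ) :
    outerΦ x =
      ΦcoeffMatrix * vecMulVec (cubicMonomials x) (cubicMonomials x) * ΦcoeffMatrixᵀ := by
  rw [mul_vecMulVec, vecMulVec_mul, vecMul_transpose, ← Φvec_eq_mulVec]
  rfl

theorem span_image_Φvec {S : Set ℝ} (hS : S.Infinite) : span ℝ (Φvec '' S) = ⊤ := by
  rw [show Φvec = ΦcoeffMatrix.mulVecLin ∘ cubicMonomials from funext Φvec_eq_mulVec,
    Set.image_comp, span_image, span_image_cubicMonomials hS, Submodule.map_top,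
    LinearMap.range_eq_top]
  exact mulVec_surjective_iff_isUnit.mpr isUnit_ΦcoeffMatrix

theorem span_image_outerΦ {S : Set ℝ} (hS : S.Infinite) : span ℝ (outerΦ '' S) = SymmSub := by
  rw [show outerΦ = (LinearMap.mulLeft ℝ ΦcoeffMatrix ∘ₗ LinearMap.mulRight ℝ ΦcoeffMatrixᵀ) ∘
      fun x => vecMulVec (cubicMonomials x) (cubicMonomials x) from
      funext fun x => (outerΦ_eq_mul_vecMulVec_mul x).trans (Matrix.mul_assoc ..),
    Set.image_comp, span_image, span_image_vecMulVec_cubicMonomials hS,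
    map_congruence_SymmSub isUnit_ΦcoeffMatrix]

/-- the vectors `Φ(x)`, `x ∈ (0,1)`, span `ℝ³`; the outer products
`Φ(x)Φ(x)ᵀ`, `x ∈ (0,1)`, span the full 6-dimensional space of `3×3` symmetric
matrices; but the five outer products `Φ(m/5)Φ(m/5)ᵀ`, `0 ≤ m ≤ 4`, do not span
that space. -/
theorem stmt17 :
    Submodule.span ℝ (Φvec '' Set.Ioo (0 : ℝ) 1) = (⊤ : Submodule ℝ (Fin 3 → ℝ)) ∧
    Submodule.span ℝ (outerΦ '' Set.Ioo (0 : ℝ) 1) = SymmSub ∧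
    Module.finrank ℝ ↥SymmSub = 6 ∧
    Submodule.span ℝ (Set.range fun m : Fin 5 => outerΦ ((m : ℕ) / 5 : ℝ)) ≠ SymmSub := by
  have hS : (Set.Ioo (0 : ℝ) 1).Infinite := Set.Ioo_infinite zero_lt_one
  refine ⟨span_image_Φvec hS, span_image_outerΦ hS, finrank_SymmSub, fun h => ?_⟩
  have hle := finrank_range_le_card (R := ℝ) fun m : Fin 5 => outerΦ ((m : ℕ) / 5 : ℝ)
  rw [Set.finrank, h, finrank_SymmSub, Fintype.card_fin] at hle
  omega
end

section
/- Let A be a bounded open set and V a locally finite-dimensional space of continuous signals on ℝ^d having the local complement property on A. If B is a bounded open subset of A such that any two signals g, f ∈ V satisfying |g(x)| = |f(x)| for all x ∈ B necessarily satisfy |g(x)| = |f(x)| for all x ∈ A, then V also has the local complement property on B. -/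
theorem abs_add_eq_abs_sub_iff {R : Type*} [CommRing R] [LinearOrder R] [IsStrictOrderedRing R]
    {a b : R} : |a + b| = |a - b| ↔ a * b = 0 := by
  rw [← sq_eq_sq₀ (abs_nonneg _) (abs_nonneg _), sq_abs, sq_abs]
  constructor <;> intro h <;> linarith

theorem localComplementProperty_iff {d : ℕ} {V : Submodule ℝ ((Fin d → ℝ) → ℝ)}
    {A : Set (Fin d → ℝ)} :
    LocalComplementProperty d V A ↔ ∀ f ∈ V, ∀ g ∈ V,
      (∀ x ∈ A, f x = 0 ∨ g x = 0) → (∀ x ∈ A, f x = 0) ∨ (∀ x ∈ A, g x = 0) := by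
  constructor
  · intro hLCP f hf g hg hfg
    by_contra! h
    refine hLCP {x ∈ A | f x = 0} (Set.sep_subset _ _) ⟨f, hf, g, hg, ?_, ?_, ?_, ?_⟩
    · simpa using h.1
    · simpa using h.2
    · exact fun x hx => hx.2
    · rintro x ⟨hxA, hx⟩
      exact (hfg x hxA).resolve_left fun h0 => hx ⟨hxA, h0⟩
  · rintro h A' hA' ⟨f, hf, g, hg, hf0, hg0, hfA', hgA'⟩
    refine (h f hf g hg fun x hx => ?_).elim hf0 hg0
    by_cases hx' : x ∈ A'
    · exact .inl (hfA' x hx')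
    · exact .inr (hgA' x ⟨hx, hx'⟩)

theorem stmt19_general (d : ℕ) (V : Submodule ℝ ((Fin d → ℝ) → ℝ))
    (A B : Set (Fin d → ℝ))
    (hBA : B ⊆ A)
    (hLCPA : LocalComplementProperty d V A)
    (hmag : ∀ f ∈ V, ∀ g ∈ V, (∀ x ∈ B, |g x| = |f x|) → ∀ x ∈ A, |g x| = |f x|) :
    LocalComplementProperty d V B := by
  rw [localComplementProperty_iff] at hLCPA ⊢
  intro f hf g hg hfg
  have hmagB : ∀ x ∈ B, |f x + g x| = |f x - g x| := fun x hx =>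
    abs_add_eq_abs_sub_iff.2 (mul_eq_zero.2 (hfg x hx))
  have hmagA : ∀ x ∈ A, |f x + g x| = |f x - g x| :=
    hmag (f - g) (V.sub_mem hf hg) (f + g) (V.add_mem hf hg) hmagB
  have hfgA : ∀ x ∈ A, f x = 0 ∨ g x = 0 := fun x hx =>
    mul_eq_zero.1 (abs_add_eq_abs_sub_iff.1 (hmagA x hx))
  exact (hLCPA f hf g hg hfgA).imp (fun h x hx => h x (hBA hx)) (fun h x hx => h x (hBA hx))

/-- let `A` be a bounded open set and `V` a locally finite-dimensional
space of continuous signals on `ℝ^d` with the local complement property on `A`.  If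
`B ⊆ A` is a bounded open subset such that equality of magnitudes of two signals of
`V` on `B` forces equality of their magnitudes on `A`, then `V` also has the local
complement property on `B`. -/
theorem stmt19 (d : ℕ) (V : Submodule ℝ ((Fin d → ℝ) → ℝ))
    (hcont : ∀ f ∈ V, Continuous f)
    (hlocfd : ∀ C : Set (Fin d → ℝ), IsOpen C → Bornology.IsBounded C →
      ∃ (n : ℕ) (g : Fin n → ((Fin d → ℝ) → ℝ)),
        ∀ f ∈ V, ∃ a : Fin n → ℝ, ∀ x ∈ C, f x = ∑ i, a i * g i x)
    (A B : Set (Fin d → ℝ))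
    (hA : IsOpen A) (hAb : Bornology.IsBounded A)
    (hB : IsOpen B) (hBb : Bornology.IsBounded B) (hBA : B ⊆ A)
    (hLCPA : LocalComplementProperty d V A)
    (hmag : ∀ f ∈ V, ∀ g ∈ V, (∀ x ∈ B, |g x| = |f x|) → ∀ x ∈ A, |g x| = |f x|) :
    LocalComplementProperty d V B :=
  stmt19_general d V A B hBA hLCPA hmag
end
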